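/- arXiv:1003.2179 — 2 statements merged into one kernel-verified Lean document; each statement's English description precedes it below -/
import Mathlib

section
/- Let (a₁,…,a_{2k+1}) be a list of complex numbers with a_{2i−1}+a_{2i} ∈ ℤ_{≥0} for i = 1,…,k and with the ♯′-condition holding, and let (b₁,…,b_{2k+2}) be a re-indexing of the list (a₁,…,a_{2k+1}, 0) such that b_{2i−1} + b_{2i} ∈ ℤ_{≥0} for i = 1,…,k+1. Then a_{2k+1} ∈ ℤ_{≥0}. -/
/-!
Pair the indices `0, …, 2k+1` of the list `(a₀, …, a_{2k}, 0)` as the re-indexing pairs them;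
paired entries then sum to elements of `ℤ_{≥0}`. If `2i` is paired with `x` and `2i+1` with `y`,
minimality in the ♯′-condition gives `a_x - a_{2i+1} ∈ ℤ_{≥0}` (or `a_y - a_{2i} ∈ ℤ_{≥0}` when
`x` is the appended zero), so `a_x + a_y ∈ ℤ_{≥0}` and one may pair `x` with `y` and `2i` with
`2i+1` instead.
Peeling off the pairs `{2i, 2i+1}` one at a time leaves `{2k, 2k+1}`, whence `a_{2k} + 0 ∈ ℤ_{≥0}`.
-/

open PowerSeries Polynomial

noncomputable section

abbrev PS := PowerSeries ℂ

/-- `f ∈ 1 + u⁻¹ℂ[[u⁻¹]]`, with `X` playing the role of `u⁻¹`. -/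
def One1 (f : PS) : Prop := PowerSeries.constantCoeff f = 1

/-- `f ∈ 1 + u⁻²ℂ[[u⁻²]]`: an even power series with constant term 1. -/
def EvenOne (f : PS) : Prop := One1 f ∧ ∀ n, Odd n → PowerSeries.coeff n f = 0

/-- `u^{-deg P}·P(u)` viewed as a power series in `X = u⁻¹`. -/
def lowerP (P : Polynomial ℂ) : PS := (P.reverse : PowerSeries ℂ)

/-- `f → g`: there is a monic `P` with `f/g = P(u+1)/P(u)`. -/
def Arrow (f g : PS) : Prop :=
  ∃ P : Polynomial ℂ, P.Monic ∧ f * lowerP P = g * lowerP (P.comp (Polynomial.X + 1))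

/-- `f ⇒ g`: there is a monic `P` of even degree with `P(u) = P(1−u)` and
`f/g = P(u+1)/P(u)`. -/
def DArrow (f g : PS) : Prop :=
  ∃ P : Polynomial ℂ, P.Monic ∧ Even P.natDegree ∧ P.comp (1 - Polynomial.X) = P ∧
    f * lowerP P = g * lowerP (P.comp (Polynomial.X + 1))

/-- `f(−u)`, i.e. `u⁻¹ ↦ −u⁻¹`. -/
def negU (f : PS) : PS := PowerSeries.rescale (-1) f

/-- the factor `1 + a·u⁻¹`. -/
def linF (a : ℂ) : PS := 1 + PowerSeries.C a * PowerSeries.X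

/-- `f` is a polynomial in `u⁻¹`. -/
def IsPolyPS (f : PS) : Prop := ∃ Q : Polynomial ℂ, (Q : PS) = f

/-- `z ∈ ℤ_{≥0}` (so `a ≥ b` iff `IsNonnegInt (a - b)`). -/
def IsNonnegInt (z : ℂ) : Prop := ∃ n : ℕ, z = n
/-- The ♯′-condition on the list `a 0, …, a (2k)` (0-indexed): for each `i < k`,
whenever `{a p + a q : 2i ≤ p < q ≤ 2k} ∩ ℤ_{≥0}` is non-empty, `a (2i) + a (2i+1)`
is its minimal element for the order `x ≥ y ↔ x - y ∈ ℤ_{≥0}`. -/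
def SharpCond (k : ℕ) (a : ℕ → ℂ) : Prop :=
  ∀ i < k,
    (∃ p q, 2*i ≤ p ∧ p < q ∧ q ≤ 2*k ∧ IsNonnegInt (a p + a q)) →
      IsNonnegInt (a (2*i) + a (2*i+1)) ∧
      ∀ p q, 2*i ≤ p → p < q → q ≤ 2*k → IsNonnegInt (a p + a q) →
        IsNonnegInt (a p + a q - (a (2*i) + a (2*i+1)))

/-- `b` is a re-indexing (permutation) of the first `m` entries of `a`. -/
def PermOf (m : ℕ) (b a : ℕ → ℂ) : Prop :=
  ∃ σ : Equiv.Perm (Fin m), ∀ i : Fin m, b i = a (σ i)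

/-- `x` is a ♯′-special element of the list `a 0, …, a (2k)`. -/
def IsSharpSpecial' (k : ℕ) (a : ℕ → ℂ) (x : ℂ) : Prop :=
  ∃ b : ℕ → ℂ, PermOf (2*k+1) b a ∧ SharpCond k b ∧ b (2*k) = x

open Set

theorem IsNonnegInt.add {x y : ℂ} (hx : IsNonnegInt x) (hy : IsNonnegInt y) :
    IsNonnegInt (x + y) := by
  obtain ⟨m, rfl⟩ := hx
  obtain ⟨n, rfl⟩ := hy
  exact ⟨m + n, by push_cast; rfl⟩

structure IsNonnegPairing {α : Type*} (c : α → ℂ) (s : Set α) (τ : α → α) : Prop where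
  mapsTo : MapsTo τ s s
  apply_apply : ∀ x ∈ s, τ (τ x) = x
  apply_ne : ∀ x ∈ s, τ x ≠ x
  nonnegInt : ∀ x ∈ s, IsNonnegInt (c x + c (τ x))

namespace IsNonnegPairing

variable {α β : Type*} {c c' : α → ℂ} {s : Set α} {τ : α → α}

theorem congr (hτ : IsNonnegPairing c s τ) (h : EqOn c c' s) : IsNonnegPairing c' s τ where
  mapsTo := hτ.mapsTo
  apply_apply := hτ.apply_apply
  apply_ne := hτ.apply_ne
  nonnegInt x hx := h hx ▸ h (hτ.mapsTo hx) ▸ hτ.nonnegInt x hx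

theorem image_equiv {c : β → ℂ} (e : α ≃ β) (hτ : IsNonnegPairing (c ∘ e) s τ) :
    IsNonnegPairing c (e '' s) (e ∘ τ ∘ e.symm) where
  mapsTo := by
    rintro _ ⟨x, hx, rfl⟩
    exact ⟨τ x, hτ.mapsTo hx, by simp⟩
  apply_apply := by
    rintro _ ⟨x, hx, rfl⟩
    simp [hτ.apply_apply x hx]
  apply_ne := by
    rintro _ ⟨x, hx, rfl⟩
    simpa using hτ.apply_ne x hx
  nonnegInt := by
    rintro _ ⟨x, hx, rfl⟩
    simpa using hτ.nonnegInt x hx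

theorem diff_pair (hτ : IsNonnegPairing c s τ) {u : α} (hu : u ∈ s) :
    IsNonnegPairing c (s \ {u, τ u}) τ where
  mapsTo x hx := by
    obtain ⟨hxs, hxu⟩ := hx
    simp only [mem_insert_iff, mem_singleton_iff, not_or] at hxu
    refine ⟨hτ.mapsTo hxs, ?_⟩
    simp only [mem_insert_iff, mem_singleton_iff, not_or]
    constructor
    · intro h
      exact hxu.2 (h ▸ (hτ.apply_apply x hxs).symm)
    · intro h
      exact hxu.1 (by rw [← hτ.apply_apply x hxs, h, hτ.apply_apply u hu])
  apply_apply x hx := hτ.apply_apply x hx.1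
  apply_ne x hx := hτ.apply_ne x hx.1
  nonnegInt x hx := hτ.nonnegInt x hx.1

/-- Replacing the pairs `{u, τ u}`, `{v, τ v}` by `{u, v}`, `{τ u, τ v}` amounts to conjugating
`τ` by the transposition of `τ u` and `v`. -/
theorem exchange [DecidableEq α] (hτ : IsNonnegPairing c s τ) {u v : α} (hu : u ∈ s)
    (hv : v ∈ s) (huv : u ≠ v) (h_uv : IsNonnegInt (c u + c v))
    (h_τ : IsNonnegInt (c (τ u) + c (τ v))) :
    ∃ τ', IsNonnegPairing c s τ' ∧ τ' u = v := by
  set σ := Equiv.swap (τ u) v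
  have hσ : MapsTo σ s s := fun x hx => by
    rw [Equiv.swap_apply_def]
    split_ifs
    exacts [hv, hτ.mapsTo hu, hx]
  have hτu : τ (τ u) = u := hτ.apply_apply u hu
  have hu_ne : u ≠ τ u := (hτ.apply_ne u hu).symm
  have hτv_ne : τ v ≠ τ u := fun h => huv (by rw [← hτu, ← h, hτ.apply_apply v hv])
  have hτv_ne' : τ v ≠ v := hτ.apply_ne v hv
  refine ⟨σ ∘ τ ∘ σ, ⟨fun x hx => hσ (hτ.mapsTo (hσ hx)), fun x hx => ?_, fun x hx => ?_,
    fun x hx => ?_⟩, ?_⟩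
  · simp [σ, hτ.apply_apply _ (hσ hx)]
  · intro h
    apply hτ.apply_ne _ (hσ hx)
    simpa [σ] using congrArg σ h
  · by_cases hxu : x = τ u
    · subst hxu
      simpa [σ, Equiv.swap_apply_of_ne_of_ne hτv_ne hτv_ne'] using h_τ
    by_cases hxv : x = v
    · subst hxv
      simpa [σ, hτu, Equiv.swap_apply_of_ne_of_ne hu_ne huv, add_comm] using h_uv
    have hσx : σ x = x := Equiv.swap_apply_of_ne_of_ne hxu hxv
    by_cases hτx : τ x = τ u
    · obtain rfl : x = u := by rw [← hτ.apply_apply x hx, hτx, hτu]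
      simpa [σ, hσx] using h_uv
    by_cases hτx' : τ x = v
    · obtain rfl : x = τ v := by rw [← hτ.apply_apply x hx, hτx']
      simpa [σ, hσx, hτx', add_comm] using h_τ
    simpa [Function.comp, hσx, σ, Equiv.swap_apply_of_ne_of_ne hτx hτx'] using hτ.nonnegInt x hx
  · simp [σ, Equiv.swap_apply_of_ne_of_ne hu_ne huv]

end IsNonnegPairing

theorem isNonnegPairing_Iio {b : ℕ → ℂ} {m : ℕ}
    (hb : ∀ i < m, IsNonnegInt (b (2*i) + b (2*i+1))) :
    IsNonnegPairing b (Iio (2*m)) (fun n => if n % 2 = 0 then n + 1 else n - 1) where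
  mapsTo n hn := by
    simp only [mem_Iio] at hn ⊢
    split_ifs <;> omega
  apply_apply n _ := by split_ifs <;> omega
  apply_ne n _ := by split_ifs <;> omega
  nonnegInt n hn := by
    simp only [mem_Iio] at hn
    obtain ⟨i, rfl | rfl⟩ := Nat.even_or_odd' n
    · simpa using hb i (by omega)
    · simpa [Nat.add_mod, add_comm] using hb i (by omega)

theorem PermOf.exists_isNonnegPairing {m : ℕ} {b c : ℕ → ℂ} (hperm : PermOf (2*m) b c)
    (hb : ∀ i < m, IsNonnegInt (b (2*i) + b (2*i+1))) :
    ∃ τ, IsNonnegPairing c (Iio (2*m)) τ := by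
  obtain ⟨σ, hσ⟩ := hperm
  set e : Equiv.Perm ℕ := σ.extendDomain Fin.equivSubtype
  have he : ∀ n (hn : n < 2*m), e n = σ ⟨n, hn⟩ := fun n hn =>
    Equiv.Perm.extendDomain_apply_subtype (f := Fin.equivSubtype) (b := n) _ hn
  have he_symm : ∀ n (hn : n < 2*m), e.symm n = σ.symm ⟨n, hn⟩ := fun n hn =>
    Equiv.Perm.extendDomain_apply_subtype (e := σ.symm) (f := Fin.equivSubtype) (b := n) hn
  have himage : e '' Iio (2*m) = Iio (2*m) := by
    ext n
    constructor
    · rintro ⟨n, hn, rfl⟩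
      exact (he n hn).symm ▸ (σ _).isLt
    · intro hn
      exact ⟨e.symm n, (he_symm n hn).symm ▸ (σ.symm _).isLt, e.apply_symm_apply n⟩
  refine ⟨_, himage ▸ ((isNonnegPairing_Iio hb).congr fun n hn => ?_).image_equiv e⟩
  simp [he n hn, hσ ⟨n, hn⟩]

def appendZero (k : ℕ) (a : ℕ → ℂ) (n : ℕ) : ℂ := if n = 2*k+1 then 0 else a n

section appendZero

variable {k : ℕ} {a : ℕ → ℂ}

theorem appendZero_self : appendZero k a (2*k+1) = 0 := if_pos rfl

theorem appendZero_of_le {n : ℕ} (hn : n ≤ 2*k) : appendZero k a n = a n := if_neg (by omega)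

theorem SharpCond.nonnegInt_sub (hcond : SharpCond k a) {i p q : ℕ} (hi : i < k) (hp : 2*i ≤ p)
    (hpq : p < q) (hq : q ≤ 2*k) (h : IsNonnegInt (a p + a q)) :
    IsNonnegInt (a (2*i) + a (2*i+1)) ∧ IsNonnegInt (a p + a q - (a (2*i) + a (2*i+1))) :=
  have h' := hcond i hi ⟨p, q, hp, hpq, hq, h⟩
  ⟨h'.1, h'.2 p q hp hpq hq h⟩

theorem SharpCond.nonnegInt_pairs (hcond : SharpCond k a) {j : ℕ} (hj : j < k) {τ : ℕ → ℕ}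
    (hτ : IsNonnegPairing (appendZero k a) (Ico (2*j) (2*k+2)) τ) :
    IsNonnegInt (appendZero k a (2*j) + appendZero k a (2*j+1)) ∧
      IsNonnegInt (appendZero k a (τ (2*j)) + appendZero k a (τ (2*j+1))) := by
  have h0 : 2*j ∈ Ico (2*j) (2*k+2) := mem_Ico.2 ⟨le_rfl, by omega⟩
  have h1 : 2*j+1 ∈ Ico (2*j) (2*k+2) := mem_Ico.2 ⟨by omega, by omega⟩
  have hx := hτ.mapsTo h0
  have hy := hτ.mapsTo h1
  simp only [mem_Ico] at hx hy
  have hx0 := hτ.apply_ne _ h0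
  have hy1 := hτ.apply_ne _ h1
  have hxy : τ (2*j) ≠ τ (2*j+1) := fun h => by
    have := hτ.apply_apply _ h0
    rw [h, hτ.apply_apply _ h1] at this
    omega
  have h_x := hτ.nonnegInt _ h0
  have h_y := hτ.nonnegInt _ h1
  rw [appendZero_of_le (a := a) (show 2*j+1 ≤ 2*k by omega)]
  rw [appendZero_of_le (a := a) (show 2*j+1 ≤ 2*k by omega)] at h_y
  rw [appendZero_of_le (by omega)] at h_x ⊢
  by_cases hxz : τ (2*j) = 2*k+1
  · have hyx : τ (2*j+1) ≠ 2*j := fun h => by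
      have := hτ.apply_apply _ h1
      rw [h] at this
      omega
    rw [appendZero_of_le (show τ (2*j+1) ≤ 2*k by omega)] at h_y ⊢
    obtain ⟨h01, hsub⟩ := hcond.nonnegInt_sub (p := 2*j+1) hj (by omega) (by omega) (by omega) h_y
    refine ⟨h01, ?_⟩
    rw [hxz, appendZero_self] at h_x ⊢
    convert hsub.add h_x using 1
    ring
  · rw [appendZero_of_le (show τ (2*j) ≤ 2*k by omega)] at h_x ⊢
    obtain ⟨h01, hsub⟩ := hcond.nonnegInt_sub hj le_rfl (by omega) (by omega) h_x
    refine ⟨h01, ?_⟩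
    convert hsub.add h_y using 1
    ring

theorem SharpCond.exists_isNonnegPairing_Ico_succ (hcond : SharpCond k a) {j : ℕ} (hj : j < k)
    {τ : ℕ → ℕ} (hτ : IsNonnegPairing (appendZero k a) (Ico (2*j) (2*k+2)) τ) :
    ∃ τ', IsNonnegPairing (appendZero k a) (Ico (2*(j+1)) (2*k+2)) τ' := by
  obtain ⟨h01, hxy⟩ := hcond.nonnegInt_pairs hj hτ
  have h0 : 2*j ∈ Ico (2*j) (2*k+2) := mem_Ico.2 ⟨le_rfl, by omega⟩
  obtain ⟨τ', hτ', hτ'j⟩ := hτ.exchange (v := 2*j+1) h0 (mem_Ico.2 ⟨by omega, by omega⟩)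
    (by omega) h01 hxy
  refine ⟨τ', ?_⟩
  convert hτ'.diff_pair h0 using 1
  ext n
  simp only [hτ'j, mem_Ico, mem_sdiff, mem_insert_iff, mem_singleton_iff]
  omega

theorem SharpCond.nonnegInt_of_isNonnegPairing (hcond : SharpCond k a) {j : ℕ} (hj : j ≤ k)
    {τ : ℕ → ℕ} (hτ : IsNonnegPairing (appendZero k a) (Ico (2*j) (2*k+2)) τ) :
    IsNonnegInt (a (2*k)) := by
  rcases hj.lt_or_eq with hj | rfl
  · obtain ⟨τ', hτ'⟩ := hcond.exists_isNonnegPairing_Ico_succ hj hτ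
    exact hcond.nonnegInt_of_isNonnegPairing hj hτ'
  · have h0 : 2*j ∈ Ico (2*j) (2*j+2) := by simp
    have hx := hτ.mapsTo h0
    simp only [mem_Ico] at hx
    have hx1 : τ (2*j) = 2*j+1 := by have := hτ.apply_ne _ h0; omega
    simpa [hx1, appendZero_self, appendZero_of_le le_rfl] using hτ.nonnegInt _ h0
termination_by k - j

end appendZero

theorem augment_zero_special_bound_general (k : ℕ) (a b : ℕ → ℂ)
    (hcond : SharpCond k a)
    (hperm : PermOf (2*k+2) b (fun n => if n = 2*k+1 then (0 : ℂ) else a n))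
    (hpb : ∀ i < k+1, IsNonnegInt (b (2*i) + b (2*i+1))) :
    IsNonnegInt (a (2*k)) := by
  obtain ⟨τ, hτ⟩ := PermOf.exists_isNonnegPairing (m := k+1) (c := appendZero k a) hperm hpb
  refine hcond.nonnegInt_of_isNonnegPairing (j := 0) (τ := τ) k.zero_le ?_
  rwa [Nat.mul_zero, ← bot_eq_zero, Ico_bot]

/-- If the list (a₁,…,a_{2k+1},0) admits a re-indexing with nonnegative pair sums,
then a_{2k+1} ∈ ℤ_{≥0}. -/
theorem augment_zero_special_bound (k : ℕ) (a b : ℕ → ℂ)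
    (hpa : ∀ i < k, IsNonnegInt (a (2*i) + a (2*i+1)))
    (hcond : SharpCond k a)
    (hperm : PermOf (2*k+2) b (fun n => if n = 2*k+1 then (0 : ℂ) else a n))
    (hpb : ∀ i < k+1, IsNonnegInt (b (2*i) + b (2*i+1))) :
    IsNonnegInt (a (2*k)) :=
  augment_zero_special_bound_general k a b hcond hperm hpb
end
end

section
/- If a list (a₁,…,a_{2k+1}) of complex numbers satisfies the ♯′-condition and a_{2i−1}+a_{2i} ∈ ℤ_{≥0} for i = 1,…,k, then for any a ∈ ℂ the list (a, −a, a₁,…,a_{2k+1}) also satisfies the ♯′-condition (with the pairing (a,−a) as its first pair), and has the same ♯′-special element a_{2k+1}. -/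
open PowerSeries Polynomial

noncomputable section

theorem SharpCond.cons_pair {k : ℕ} {b : ℕ → ℂ} (hpair : b 0 + b 1 = 0)
    (htail : SharpCond k (fun n => b (n + 2))) : SharpCond (k + 1) b := by
  intro i hi hex
  cases i with
  | zero =>
    -- `0` is the least element of `ℤ_{≥0}`, so a pair summing to `0` is always minimal.
    refine ⟨hpair ▸ ⟨0, by simp⟩, fun p q _ _ _ hsum => ?_⟩
    rwa [hpair, sub_zero]
  | succ j =>
    have shift : ∀ p, 2 * (j + 1) ≤ p → ∃ p', p = p' + 2 ∧ 2 * j ≤ p' :=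
      fun p hp => ⟨p - 2, by omega, by omega⟩
    obtain ⟨p, q, hp, hpq, hq, hsum⟩ := hex
    obtain ⟨p, rfl, hp'⟩ := shift p hp
    obtain ⟨q, rfl, -⟩ := shift q (by omega)
    have hj := htail j (by omega) ⟨p, q, hp', by omega, by omega, hsum⟩
    refine ⟨hj.1, fun p q hp hpq hq hsum => ?_⟩
    obtain ⟨p, rfl, hp'⟩ := shift p hp
    obtain ⟨q, rfl, -⟩ := shift q (by omega)
    exact hj.2 p q hp' (by omega) (by omega) hsum

theorem SharpCond.isSharpSpecial' {k : ℕ} {a : ℕ → ℂ} (h : SharpCond k a) :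
    IsSharpSpecial' k a (a (2 * k)) :=
  ⟨a, ⟨Equiv.refl _, fun _ => rfl⟩, h, rfl⟩

theorem prepend_pair_sharp_general (k : ℕ) (a : ℕ → ℂ) (x : ℂ)
    (hcond : SharpCond k a) :
    SharpCond (k+1) (fun n => if n = 0 then x else if n = 1 then -x else a (n-2)) ∧
    IsSharpSpecial' (k+1)
      (fun n => if n = 0 then x else if n = 1 then -x else a (n-2)) (a (2*k)) := by
  have hb : SharpCond (k + 1) (fun n => if n = 0 then x else if n = 1 then -x else a (n - 2)) :=
    SharpCond.cons_pair (by simp) (by simpa using hcond)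
  refine ⟨hb, ?_⟩
  simpa [Nat.mul_succ] using hb.isSharpSpecial'

/-- Prepending a pair (x, −x) to a ♯′-indexed list keeps the ♯′-condition and the
♯′-special element. -/
theorem prepend_pair_sharp (k : ℕ) (a : ℕ → ℂ) (x : ℂ)
    (hcond : SharpCond k a)
    (hpa : ∀ i < k, IsNonnegInt (a (2*i) + a (2*i+1))) :
    SharpCond (k+1) (fun n => if n = 0 then x else if n = 1 then -x else a (n-2)) ∧
    IsSharpSpecial' (k+1)
      (fun n => if n = 0 then x else if n = 1 then -x else a (n-2)) (a (2*k)) :=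
  prepend_pair_sharp_general k a x hcond
end
end
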